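/- Let δ_α = 𝒵_α − N^β_α 𝒱_β be the adapted frame of a nonlinear connection on the prolongation 𝒯'E. Then [δ_α, δ_β] = C^γ_{αβ} δ_γ + ℛ^γ_{αβ} 𝒱_γ, where ℛ^γ_{αβ} = C^ε_{αβ} N^γ_ε + ρᵏ_β ∂N^γ_α/∂zᵏ − ρᵏ_α ∂N^γ_β/∂zᵏ − N^ε_β ∂N^γ_α/∂u^ε + N^ε_α ∂N^γ_β/∂u^ε; moreover [δ_α, 𝒱_β] = (∂N^γ_α/∂u^β) 𝒱_γ and [𝒱_α, 𝒱_β] = 0. -/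
import Mathlib

open scoped BigOperators

noncomputable section

/-- Total space of the bundle `E`, in local coordinates `(z,u)`. -/
abbrev TotE (n m : ℕ) := (Fin n → ℂ) × (Fin m → ℂ)

/-- `∂f/∂zᵏ` on the total space. -/
def pdz {n m : ℕ} (k : Fin n) (f : TotE n m → ℂ) (p : TotE n m) : ℂ :=
  fderiv ℂ f p (Pi.single k 1, 0)

/-- `∂f/∂u^α` on the total space. -/
def pdu {n m : ℕ} (α : Fin m) (f : TotE n m → ℂ) (p : TotE n m) : ℂ :=
  fderiv ℂ f p (0, Pi.single α 1)

/-- A section of the prolongation `𝒯'E`, written `X = X₁^α 𝒵_α + X₂^α 𝒱_α`. -/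
abbrev SecT (n m : ℕ) := (Fin m → TotE n m → ℂ) × (Fin m → TotE n m → ℂ)

/-- The anchor `ρ_𝒯` of the prolongation applied to a section, acting on functions:
`ρ_𝒯(𝒵_α) = ρᵏ_α ∂/∂zᵏ`, `ρ_𝒯(𝒱_α) = ∂/∂u^α`. -/
def rhoT {n m : ℕ} (ρ : Fin m → Fin n → (Fin n → ℂ) → ℂ) (X : SecT n m)
    (f : TotE n m → ℂ) (p : TotE n m) : ℂ :=
  ∑ α, X.1 α p * (∑ k, ρ α k p.1 * pdz k f p) + ∑ α, X.2 α p * pdu α f p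

/-- `𝒵`-components of the bracket on `𝒯'E`, built from `[𝒵_α,𝒵_β] = C^γ_{αβ} 𝒵_γ`,
`[𝒵_α,𝒱_β] = [𝒱_α,𝒱_β] = 0` and the Leibniz rule with anchor `ρ_𝒯`. -/
def brkTZ {n m : ℕ} (ρ : Fin m → Fin n → (Fin n → ℂ) → ℂ)
    (Cs : Fin m → Fin m → Fin m → (Fin n → ℂ) → ℂ)
    (X Y : SecT n m) (β : Fin m) (p : TotE n m) : ℂ :=
  (∑ γ, ∑ δ, X.1 γ p * Y.1 δ p * Cs γ δ β p.1)
    + rhoT ρ X (Y.1 β) p - rhoT ρ Y (X.1 β) p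

/-- `𝒱`-components of the bracket on `𝒯'E`. -/
def brkTV {n m : ℕ} (ρ : Fin m → Fin n → (Fin n → ℂ) → ℂ)
    (X Y : SecT n m) (β : Fin m) (p : TotE n m) : ℂ :=
  rhoT ρ X (Y.2 β) p - rhoT ρ Y (X.2 β) p


lemma pdz_const {n m : ℕ} (k : Fin n) (c : ℂ) (p : TotE n m) :
    pdz k (fun _ => c) p = 0 := by
  simp [pdz]

lemma pdu_const {n m : ℕ} (α : Fin m) (c : ℂ) (p : TotE n m) :
    pdu α (fun _ => c) p = 0 := by
  simp [pdu]

lemma pdz_neg {n m : ℕ} (k : Fin n) (f : TotE n m → ℂ) (p : TotE n m) :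
    pdz k (fun q => -(f q)) p = -pdz k f p := by
  simp [pdz, fderiv_neg]

lemma pdu_neg {n m : ℕ} (α : Fin m) (f : TotE n m → ℂ) (p : TotE n m) :
    pdu α (fun q => -(f q)) p = -pdu α f p := by
  simp [pdu, fderiv_neg]

/-- Lie brackets of the adapted frame `δ_α = 𝒵_α − N^β_α 𝒱_β` on `𝒯'E`:
`[δ_α, δ_β] = C^γ_{αβ} δ_γ + ℛ^γ_{αβ} 𝒱_γ`, `[δ_α, 𝒱_β] = (∂N^γ_α/∂u^β) 𝒱_γ`,
`[𝒱_α, 𝒱_β] = 0`, with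
`ℛ^γ_{αβ} = C^ε_{αβ} N^γ_ε + ρᵏ_β ∂N^γ_α/∂zᵏ − ρᵏ_α ∂N^γ_β/∂zᵏ
  − N^ε_β ∂N^γ_α/∂u^ε + N^ε_α ∂N^γ_β/∂u^ε`. -/
theorem stmt_11 {n m : ℕ}
    (ρ : Fin m → Fin n → (Fin n → ℂ) → ℂ)
    (Cs : Fin m → Fin m → Fin m → (Fin n → ℂ) → ℂ)
    (N : Fin m → Fin m → TotE n m → ℂ)
    (hρ : ∀ α k, ContDiff ℂ ⊤ (ρ α k))
    (hCs : ∀ α β γ, ContDiff ℂ ⊤ (Cs α β γ))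
    (hN : ∀ β α, ContDiff ℂ ⊤ (N β α)) :
    let δ : Fin m → SecT n m := fun α =>
      (fun γ _ => if γ = α then 1 else 0, fun γ p => -(N γ α p))
    let V : Fin m → SecT n m := fun α =>
      (fun _ _ => 0, fun γ _ => if γ = α then 1 else 0)
    let R : Fin m → Fin m → Fin m → TotE n m → ℂ := fun γ α β p =>
      (∑ ε, Cs α β ε p.1 * N γ ε p) + (∑ k, ρ β k p.1 * pdz k (N γ α) p)
        - (∑ k, ρ α k p.1 * pdz k (N γ β) p) - (∑ ε, N ε β p * pdu ε (N γ α) p)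
        + ∑ ε, N ε α p * pdu ε (N γ β) p
    (∀ α β γ p, brkTZ ρ Cs (δ α) (δ β) γ p = Cs α β γ p.1) ∧
    (∀ α β γ p, brkTV ρ (δ α) (δ β) γ p
        = (∑ ε, Cs α β ε p.1 * (-(N γ ε p))) + R γ α β p) ∧
    (∀ α β γ p, brkTZ ρ Cs (δ α) (V β) γ p = 0) ∧
    (∀ α β γ p, brkTV ρ (δ α) (V β) γ p = pdu β (N γ α) p) ∧
    (∀ α β γ p, brkTZ ρ Cs (V α) (V β) γ p = 0) ∧
    (∀ α β γ p, brkTV ρ (V α) (V β) γ p = 0) := by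
  intro δ V R
  refine ⟨?_, ?_, ?_, ?_, ?_, ?_⟩ <;> intro α β γ p <;>
    simp only [δ, V, R, brkTZ, brkTV, rhoT, pdz_neg, pdu_neg, pdz_const, pdu_const,
      mul_zero, zero_mul, Finset.sum_const_zero, Finset.mul_sum, ite_mul, one_mul,
      Finset.sum_ite_eq', Finset.mem_univ, if_true, add_zero, zero_add, sub_zero, zero_sub,
      mul_neg, neg_mul, neg_neg, Finset.sum_neg_distrib] <;>
  simp [Finset.sum_ite_eq'] <;> ring

end
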